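/- Let n ≥ 1 be an integer, δ ∈ (0, n], and f ∈ L¹_loc(ℝⁿ, ℋ^δ_∞) with |f(x)| < ∞ for every x ∈ ℝⁿ. Then for every cube Q of ℝⁿ: (1) e^{f_{Q,δ}} ≤ (1/\~ℋ^δ_∞(Q)) · ( ∫_{Q∩E_{f,+}} e^{f} d\~ℋ^δ_∞ + ∫_{Q∩E_{f,−}} e^{f} d\~ℋ^δ_∞ ), and (2) e^{−f_{Q,δ}} ≤ (1/\~ℋ^δ_∞(Q)) · ( ∫_{Q∩E_{f,+}} e^{−f} d\~ℋ^δ_∞ + ∫_{Q∩E_{f,−}} e^{−f} d\~ℋ^δ_∞ ). -/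

import Mathlib

/-!
Jensen's inequality for the Choquet average. With `a = f_{Q,δ}`, the tangent line
`exp x ≥ exp a * (1 - a + x)` is integrated separately over `E₊ = Q ∩ {f ≥ 0}` and
`E₋ = Q ∩ {f < 0}`. Choquet integrals are not additive, but for a monotone subadditive set
function `μ` they still satisfy `∫_E (c + g) ≥ c μ(E) + ∫_E g` for `g ≥ 0` and
`∫_E (c - g) + ∫_E g ≥ c μ(E)`; the resulting lower bounds add up to
`exp a * (μ E₊ + μ E₋) ≥ exp a * μ Q`, since `a` is exactly the value making the affine terms
cancel. The second inequality is the first one for `-f`, with `E₊` and `E₋` exchanged.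
For the dyadic content all this needs is `0 < ~ℋ^δ_∞(Q) < ∞` (the lower bound by comparing
volumes, which is where `δ ≤ n` enters) and finiteness of the Choquet integrals of `f`, which
follows from `~ℋ^δ_∞ ≤ 2ⁿ 2^δ ℋ^δ_∞`.
-/

open scoped ENNReal
open Set MeasureTheory

noncomputable section

/-- An axis-parallel cube in `ℝⁿ`, described by its lower corner and positive side length. -/
structure Cube (n : ℕ) where
  corner : Fin n → ℝ
  side : ℝ
  side_pos : 0 < side

namespace Cube

/-- The half-open cube `∏ᵢ [cornerᵢ, cornerᵢ + side)` as a set of points. -/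
def toSet {n : ℕ} (Q : Cube n) : Set (Fin n → ℝ) :=
  {x | ∀ i, Q.corner i ≤ x i ∧ x i < Q.corner i + Q.side}

/-- A cube is dyadic if it has the form `2^k·(z + [0,1)ⁿ)` with `k ∈ ℤ`, `z ∈ ℤⁿ`. -/
def IsDyadic {n : ℕ} (Q : Cube n) : Prop :=
  ∃ (k : ℤ) (z : Fin n → ℤ), Q.side = (2:ℝ) ^ k ∧ ∀ i, Q.corner i = (z i : ℝ) * (2:ℝ) ^ k

/-- `Q'` is a dyadic subcube of `Q`, i.e. obtained from `Q` by repeated bisection. -/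
def IsDyadicSubcube {n : ℕ} (Q' Q : Cube n) : Prop :=
  ∃ (k : ℕ) (z : Fin n → ℕ), (∀ i, z i < 2 ^ k) ∧
    Q'.side = Q.side / 2 ^ k ∧ ∀ i, Q'.corner i = Q.corner i + (z i : ℝ) * (Q.side / 2 ^ k)

/-- The concentric dilate `t·Q` of a cube. -/
def dilate {n : ℕ} (Q : Cube n) (t : ℝ) (ht : 0 < t) : Cube n :=
  ⟨fun i => Q.corner i + Q.side / 2 - t * Q.side / 2, t * Q.side, mul_pos ht Q.side_pos⟩

end Cube

/-- The Hausdorff content `ℋ^δ_∞`. -/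
def hContent (n : ℕ) (δ : ℝ) (E : Set (Fin n → ℝ)) : ℝ≥0∞ :=
  ⨅ (Qs : ℕ → Cube n) (_ : E ⊆ ⋃ i, (Qs i).toSet), ∑' i, ENNReal.ofReal ((Qs i).side ^ δ)

/-- The dyadic Hausdorff content `~ℋ^δ_∞`. -/
def dContent (n : ℕ) (δ : ℝ) (E : Set (Fin n → ℝ)) : ℝ≥0∞ :=
  ⨅ (Qs : ℕ → Cube n) (_ : (∀ i, (Qs i).IsDyadic) ∧ E ⊆ ⋃ i, (Qs i).toSet),
    ∑' i, ENNReal.ofReal ((Qs i).side ^ δ)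

/-- The Choquet integral `∫_E f dℋ^δ_∞`. -/
def integH (n : ℕ) (δ : ℝ) (f : (Fin n → ℝ) → ℝ) (E : Set (Fin n → ℝ)) : ℝ≥0∞ :=
  ∫⁻ t in Ioi (0:ℝ), hContent n δ {x | x ∈ E ∧ t < f x}

/-- The Choquet integral `∫_E f d~ℋ^δ_∞` w.r.t. the dyadic Hausdorff content. -/
def integD (n : ℕ) (δ : ℝ) (f : (Fin n → ℝ) → ℝ) (E : Set (Fin n → ℝ)) : ℝ≥0∞ :=
  ∫⁻ t in Ioi (0:ℝ), dContent n δ {x | x ∈ E ∧ t < f x}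

/-- A property holds `ℋ^δ_∞`-a.e. -/
def AEContent (n : ℕ) (δ : ℝ) (P : (Fin n → ℝ) → Prop) : Prop :=
  hContent n δ {x | ¬ P x} = 0

/-- `ℋ^δ_∞`-quasicontinuity. -/
def QuasiCont (n : ℕ) (δ : ℝ) (f : (Fin n → ℝ) → ℝ) : Prop :=
  ∀ ε : ℝ, 0 < ε → ∃ O : Set (Fin n → ℝ),
    IsOpen O ∧ hContent n δ O < ENNReal.ofReal ε ∧ ContinuousOn f Oᶜ

/-- `L¹_loc(ℝⁿ, ℋ^δ_∞)`. -/
def MemL1loc (n : ℕ) (δ : ℝ) (f : (Fin n → ℝ) → ℝ) : Prop :=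
  QuasiCont n δ f ∧ ∀ K : Set (Fin n → ℝ), IsCompact K → integH n δ (fun x => |f x|) K < ⊤

/-- `L^∞(ℝⁿ, ℋ^δ_∞)`. -/
def MemLinf (n : ℕ) (δ : ℝ) (f : (Fin n → ℝ) → ℝ) : Prop :=
  QuasiCont n δ f ∧ ∃ M : ℝ, AEContent n δ (fun x => |f x| ≤ M)

/-- The `BMO(ℝⁿ, ℋ^δ_∞)` seminorm. -/
def bmoNorm (n : ℕ) (δ : ℝ) (f : (Fin n → ℝ) → ℝ) : ℝ≥0∞ :=
  ⨆ Q : Cube n, ⨅ c : ℝ,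
    integH n δ (fun x => |f x - c|) Q.toSet / hContent n δ Q.toSet

/-- Membership in `BMO(ℝⁿ, ℋ^δ_∞)`. -/
def MemBMO (n : ℕ) (δ : ℝ) (f : (Fin n → ℝ) → ℝ) : Prop :=
  MemL1loc n δ f ∧ bmoNorm n δ f < ⊤

/-- `essinf_{x ∈ Q} f := inf {t ∈ (0,∞) : ℋ^δ_∞({x ∈ Q : f x < t}) > 0}`. -/
def essInfQ (n : ℕ) (δ : ℝ) (f : (Fin n → ℝ) → ℝ) (Q : Cube n) : ℝ :=
  sInf {t : ℝ | 0 < t ∧ 0 < hContent n δ {x | x ∈ Q.toSet ∧ f x < t}}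

/-- The `BLO(ℝⁿ, ℋ^δ_∞)` seminorm. -/
def bloNorm (n : ℕ) (δ : ℝ) (f : (Fin n → ℝ) → ℝ) : ℝ≥0∞ :=
  ⨆ Q : Cube n,
    integH n δ (fun x => |f x - essInfQ n δ f Q|) Q.toSet / hContent n δ Q.toSet

/-- Membership in `BLO(ℝⁿ, ℋ^δ_∞)`. -/
def MemBLO (n : ℕ) (δ : ℝ) (f : (Fin n → ℝ) → ℝ) : Prop :=
  MemL1loc n δ f ∧ bloNorm n δ f < ⊤

/-- A weight: locally Choquet-integrable, quasicontinuous, positive `ℋ^δ_∞`-a.e. -/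
def IsWeight (n : ℕ) (δ : ℝ) (w : (Fin n → ℝ) → ℝ) : Prop :=
  MemL1loc n δ w ∧ AEContent n δ (fun x => 0 < w x)

/-- The capacitary Muckenhoupt `A_{p,δ}` constant, for `p > 1`. -/
def apConst (n : ℕ) (δ p : ℝ) (w : (Fin n → ℝ) → ℝ) : ℝ≥0∞ :=
  ⨆ Q : Cube n,
    (integH n δ w Q.toSet / hContent n δ Q.toSet) *
      (integH n δ (fun x => w x ^ (-(1 / (p - 1)))) Q.toSet / hContent n δ Q.toSet) ^ (p - 1)

/-- Membership in `A_{p,δ}`, `p > 1`. -/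
def MemAp (n : ℕ) (δ p : ℝ) (w : (Fin n → ℝ) → ℝ) : Prop :=
  IsWeight n δ w ∧ apConst n δ p w < ⊤

/-- The Hardy–Littlewood maximal operator w.r.t. `ℋ^δ_∞`. -/
def maxOp (n : ℕ) (δ : ℝ) (g : (Fin n → ℝ) → ℝ) (x : Fin n → ℝ) : ℝ≥0∞ :=
  ⨆ (Q : Cube n) (_ : x ∈ Q.toSet),
    integH n δ (fun y => |g y|) Q.toSet / hContent n δ Q.toSet

/-- The capacitary `A_{1,δ}` constant. -/
def a1Const (n : ℕ) (δ : ℝ) (w : (Fin n → ℝ) → ℝ) : ℝ≥0∞ :=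
  sInf {c : ℝ≥0∞ | 0 < c ∧
    AEContent n δ (fun x => maxOp n δ w x ≤ c * ENNReal.ofReal (w x))}

/-- Membership in `A_{1,δ}`. -/
def MemA1 (n : ℕ) (δ : ℝ) (w : (Fin n → ℝ) → ℝ) : Prop :=
  IsWeight n δ w ∧ a1Const n δ w < ⊤

/-- The `A_{p,δ}` constant for `p ∈ [1,∞)` (it is the `A_{1,δ}` constant when `p = 1`). -/
def apConstGen (n : ℕ) (δ p : ℝ) (w : (Fin n → ℝ) → ℝ) : ℝ≥0∞ :=
  if p = 1 then a1Const n δ w else apConst n δ p w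

/-- Membership in `A_{p,δ}` for `p ∈ [1,∞)` (meaning `A_{1,δ}` when `p = 1`). -/
def MemApGen (n : ℕ) (δ p : ℝ) (w : (Fin n → ℝ) → ℝ) : Prop :=
  IsWeight n δ w ∧ apConstGen n δ p w < ⊤

/-- The weighted `BMO^q_w(ℝⁿ, ℋ^δ_∞)` seminorm. -/
def bmoWNorm (n : ℕ) (δ q : ℝ) (w f : (Fin n → ℝ) → ℝ) : ℝ≥0∞ :=
  ⨆ Q : Cube n, ⨅ c : ℝ,
    (integH n δ (fun x => |f x - c| ^ q * w x) Q.toSet / integH n δ w Q.toSet) ^ (1 / q)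

/-- Membership in `BMO^q_w(ℝⁿ, ℋ^δ_∞)`. -/
def MemBMOw (n : ℕ) (δ q : ℝ) (w f : (Fin n → ℝ) → ℝ) : Prop :=
  QuasiCont n δ f ∧
    (∀ K : Set (Fin n → ℝ), IsCompact K → integH n δ (fun x => |f x| ^ q * w x) K < ⊤) ∧
    bmoWNorm n δ q w f < ⊤

/-- The integral average `f_{Q,δ}` with respect to the dyadic Hausdorff content. -/
def avgQ (n : ℕ) (δ : ℝ) (f : (Fin n → ℝ) → ℝ) (Q : Cube n) : ℝ :=
  ((integD n δ f (Q.toSet ∩ {x | 0 ≤ f x})).toReal -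
      (integD n δ (fun x => -f x) (Q.toSet ∩ {x | f x < 0})).toReal) /
    ((dContent n δ (Q.toSet ∩ {x | 0 ≤ f x})).toReal +
      (dContent n δ (Q.toSet ∩ {x | f x < 0})).toReal)

section Choquet

variable {α : Type*}

def choquetIntegral (μ : Set α → ℝ≥0∞) (g : α → ℝ) (E : Set α) : ℝ≥0∞ :=
  ∫⁻ t in Ioi (0:ℝ), μ {x | x ∈ E ∧ t < g x}

/-- `avgQ n δ f Q` is by definition
`choquetAverage (dContent n δ) f (Q.toSet ∩ {x | 0 ≤ f x}) (Q.toSet ∩ {x | f x < 0})`, just as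
`integD n δ` is `choquetIntegral (dContent n δ)`. -/
def choquetAverage (μ : Set α → ℝ≥0∞) (F : α → ℝ) (E₁ E₂ : Set α) : ℝ :=
  ((choquetIntegral μ F E₁).toReal - (choquetIntegral μ (fun x => -F x) E₂).toReal) /
    ((μ E₁).toReal + (μ E₂).toReal)

variable {μ : Set α → ℝ≥0∞} {g h : α → ℝ} {E : Set α}

lemma choquetAverage_neg (F : α → ℝ) (E₁ E₂ : Set α) :
    choquetAverage μ (fun x => -F x) E₂ E₁ = -choquetAverage μ F E₁ E₂ := by
  simp only [choquetAverage, neg_neg]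
  ring

lemma antitone_levelSet (hμ : Monotone μ) (g : α → ℝ) (E : Set α) :
    Antitone fun t : ℝ => μ {x | x ∈ E ∧ t < g x} :=
  fun _ _ hst => hμ fun _ hx => ⟨hx.1, hst.trans_lt hx.2⟩

lemma choquetIntegral_mono (hμ : Monotone μ) (hgh : ∀ x ∈ E, g x ≤ h x) :
    choquetIntegral μ g E ≤ choquetIntegral μ h E :=
  lintegral_mono fun _ => hμ fun x hx => ⟨hx.1, hx.2.trans_le (hgh x hx.1)⟩

lemma choquetIntegral_le_mul {ν : Set α → ℝ≥0∞} {C : ℝ≥0∞} {K : Set α} (hν : Monotone ν)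
    (hμν : ∀ s, μ s ≤ C * ν s) (hC : C ≠ ∞) (hEK : E ⊆ K) (hgh : ∀ x ∈ E, g x ≤ h x) :
    choquetIntegral μ g E ≤ C * choquetIntegral ν h K := by
  rw [choquetIntegral, choquetIntegral, ← lintegral_const_mul' _ _ hC]
  refine lintegral_mono fun t => (hμν _).trans (mul_le_mul_right (hν ?_) C)
  exact fun x hx => ⟨hEK hx.1, hx.2.trans_le (hgh x hx.1)⟩

lemma lintegral_Ioi_comp_mul_left (F : ℝ → ℝ≥0∞) {k : ℝ} (hk : 0 < k) :
    ∫⁻ t in Ioi (0:ℝ), F (k⁻¹ * t) = ENNReal.ofReal k * ∫⁻ t in Ioi (0:ℝ), F t := by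
  have hk' : k⁻¹ ≠ 0 := inv_ne_zero hk.ne'
  have hpre : (fun t : ℝ => k⁻¹ * t) ⁻¹' Ioi 0 = Ioi 0 := by
    rw [preimage_const_mul_Ioi₀ 0 (inv_pos.2 hk), zero_div]
  calc ∫⁻ t in Ioi (0:ℝ), F (k⁻¹ * t)
      = ∫⁻ t, F t ∂(Measure.map (k⁻¹ * ·) (volume.restrict (Ioi 0))) :=
        ((MeasurableEquiv.mulLeft₀ k⁻¹ hk').measurableEmbedding.lintegral_map F).symm
    _ = ∫⁻ t, F t ∂((Measure.map (k⁻¹ * ·) volume).restrict (Ioi 0)) := by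
        rw [Measure.restrict_map (measurable_const_mul _) measurableSet_Ioi, hpre]
    _ = ENNReal.ofReal k * ∫⁻ t in Ioi (0:ℝ), F t := by
        rw [Real.map_volume_mul_left hk', Measure.restrict_smul, lintegral_smul_measure,
          inv_inv, abs_of_pos hk, smul_eq_mul]

lemma choquetIntegral_const_mul {k : ℝ} (hk : 0 < k) :
    choquetIntegral μ (fun x => k * g x) E = ENNReal.ofReal k * choquetIntegral μ g E := by
  have hlevel : ∀ t : ℝ, {x | x ∈ E ∧ t < k * g x} = {x | x ∈ E ∧ k⁻¹ * t < g x} := fun t => by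
    simp only [inv_mul_eq_div, div_lt_iff₀' hk]
  simp only [choquetIntegral, hlevel]
  exact lintegral_Ioi_comp_mul_left (fun t => μ {x | x ∈ E ∧ t < g x}) hk

lemma lintegral_Ioi_eq_Ioc_add_comp_add_right (F : ℝ → ℝ≥0∞) {c : ℝ} (hc : 0 ≤ c) :
    ∫⁻ t in Ioi (0:ℝ), F t = (∫⁻ t in Ioc 0 c, F t) + ∫⁻ t in Ioi (0:ℝ), F (t + c) := by
  rw [(measurePreserving_add_right volume c).setLIntegral_comp_emb
      (measurableEmbedding_addRight c), image_add_const_Ioi, zero_add]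
  conv_lhs => rw [← Ioc_union_Ioi_eq_Ioi hc]
  exact lintegral_union measurableSet_Ioi (Ioc_disjoint_Ioi (le_refl c))

lemma lintegral_Ioo_comp_sub_left (F : ℝ → ℝ≥0∞) (s : ℝ) :
    ∫⁻ t in Ioo 0 s, F (s - t) = ∫⁻ t in Ioo 0 s, F t := by
  rw [(Measure.measurePreserving_sub_left volume s).setLIntegral_comp_emb
    (measurableEmbedding_subLeft s), image_const_sub_Ioo, sub_self, sub_zero]

lemma choquetIntegral_eq_lintegral_Ioc_add {c : ℝ} (hc : 0 ≤ c) :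
    choquetIntegral μ g E = (∫⁻ t in Ioc 0 c, μ {x | x ∈ E ∧ t < g x}) +
      choquetIntegral μ (fun x => g x - c) E := by
  simp only [choquetIntegral, lt_sub_iff_add_lt]
  exact lintegral_Ioi_eq_Ioc_add_comp_add_right _ hc

lemma mul_add_choquetIntegral_le (hμ : Monotone μ) {c : ℝ} (hc : 0 ≤ c)
    (hg : ∀ x ∈ E, 0 ≤ g x) :
    ENNReal.ofReal c * μ E + choquetIntegral μ g E ≤ choquetIntegral μ (fun x => c + g x) E := by
  rw [choquetIntegral_eq_lintegral_Ioc_add hc (g := fun x => c + g x)]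
  simp only [add_sub_cancel_left]
  refine add_le_add ?_ (le_refl (choquetIntegral μ g E))
  calc ENNReal.ofReal c * μ E = ∫⁻ _ in Ioo 0 c, μ E := by
        rw [setLIntegral_const, Real.volume_Ioo, sub_zero, mul_comm]
    _ ≤ ∫⁻ t in Ioo 0 c, μ {x | x ∈ E ∧ t < c + g x} :=
        setLIntegral_mono ((antitone_levelSet hμ _ E).measurable) fun t ht =>
          hμ fun x hx => ⟨hx, by linarith [ht.2, hg x hx]⟩
    _ ≤ _ := lintegral_mono_set Ioo_subset_Ioc_self

lemma choquetIntegral_le_sub_add_mul (hμ : Monotone μ) {s : ℝ} (hs : 0 ≤ s) :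
    choquetIntegral μ g E ≤ choquetIntegral μ (fun x => g x - s) E + ENNReal.ofReal s * μ E := by
  rw [choquetIntegral_eq_lintegral_Ioc_add hs, add_comm]
  refine add_le_add (le_refl (choquetIntegral μ (fun x => g x - s) E)) ?_
  calc ∫⁻ t in Ioc 0 s, μ {x | x ∈ E ∧ t < g x} ≤ ∫⁻ _ in Ioc 0 s, μ E :=
        lintegral_mono fun _ => hμ fun _ hx => hx.1
    _ = ENNReal.ofReal s * μ E := by rw [setLIntegral_const, Real.volume_Ioc, sub_zero, mul_comm]

/-- An antitone function has countably many jumps, so strict and non-strict level sets give the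
same integral. -/
lemma lintegral_Ioi_levelSet_le (hμ : Monotone μ) :
    ∫⁻ t in Ioi (0:ℝ), μ {x | x ∈ E ∧ t ≤ g x} = choquetIntegral μ g E := by
  have hjumps : {t : ℝ | μ {x | x ∈ E ∧ t ≤ g x} ≠ μ {x | x ∈ E ∧ t < g x}}.Countable := by
    refine (countable_image_gt_image_Ioi fun t => μ {x | x ∈ E ∧ t ≤ g x}).mono fun t ht => ?_
    have hlt_le : {x | x ∈ E ∧ t < g x} ⊆ {x | x ∈ E ∧ t ≤ g x} := fun x hx => ⟨hx.1, hx.2.le⟩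
    refine ⟨_, (hμ hlt_le).lt_of_ne' ht, fun s hs => hμ ?_⟩
    exact fun x hx => ⟨hx.1, hs.trans_le hx.2⟩
  exact lintegral_congr_ae (ae_restrict_of_ae (ae_iff.2 (hjumps.measure_zero volume)))

lemma mul_le_choquetIntegral_const_sub_add (hμ : Monotone μ)
    (hμ_union : ∀ s t, μ (s ∪ t) ≤ μ s + μ t) (s : ℝ) :
    ENNReal.ofReal s * μ E ≤ choquetIntegral μ (fun x => s - g x) E + choquetIntegral μ g E := by
  have hcover : ∀ t, μ E ≤ μ {x | x ∈ E ∧ t < s - g x} + μ {x | x ∈ E ∧ s - t ≤ g x} :=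
    fun t => by
      refine (hμ fun x hx => ?_).trans (hμ_union _ _)
      rcases lt_or_ge t (s - g x) with ht | ht
      exacts [Or.inl ⟨hx, ht⟩, Or.inr ⟨hx, by linarith⟩]
  calc ENNReal.ofReal s * μ E = ∫⁻ _ in Ioo 0 s, μ E := by
        rw [setLIntegral_const, Real.volume_Ioo, sub_zero, mul_comm]
    _ ≤ ∫⁻ t in Ioo 0 s, (μ {x | x ∈ E ∧ t < s - g x} + μ {x | x ∈ E ∧ s - t ≤ g x}) :=
        lintegral_mono fun t => hcover t
    _ = (∫⁻ t in Ioo 0 s, μ {x | x ∈ E ∧ t < s - g x}) +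
          ∫⁻ t in Ioo 0 s, μ {x | x ∈ E ∧ t ≤ g x} := by
        rw [lintegral_add_left ((antitone_levelSet hμ _ E).measurable),
          lintegral_Ioo_comp_sub_left (fun t => μ {x | x ∈ E ∧ t ≤ g x})]
    _ ≤ _ := by
        rw [← lintegral_Ioi_levelSet_le hμ (g := g), choquetIntegral]
        exact add_le_add (lintegral_mono_set Ioo_subset_Ioi_self)
          (lintegral_mono_set Ioo_subset_Ioi_self)

lemma ofReal_mul_add_le_choquetIntegral_const_add (hμ : Monotone μ) (hg : ∀ x ∈ E, 0 ≤ g x)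
    (hE : μ E ≠ ∞) (hgE : choquetIntegral μ g E ≠ ∞) (c : ℝ) :
    ENNReal.ofReal (c * (μ E).toReal + (choquetIntegral μ g E).toReal) ≤
      choquetIntegral μ (fun x => c + g x) E := by
  rcases le_or_gt 0 c with hc | hc
  · rw [ENNReal.ofReal_add (by positivity) ENNReal.toReal_nonneg, ENNReal.ofReal_mul hc,
      ENNReal.ofReal_toReal hE, ENNReal.ofReal_toReal hgE]
    exact mul_add_choquetIntegral_le hμ hc hg
  · have h := choquetIntegral_le_sub_add_mul (g := g) (E := E) hμ (neg_nonneg.2 hc.le)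
    simp only [sub_neg_eq_add, add_comm _ c] at h
    rw [add_comm, ← sub_neg_eq_add, ← neg_mul,
      ENNReal.ofReal_sub _ (mul_nonneg (by linarith) ENNReal.toReal_nonneg),
      ENNReal.ofReal_toReal hgE, ENNReal.ofReal_mul (by linarith), ENNReal.ofReal_toReal hE]
    exact tsub_le_iff_right.2 h

lemma ofReal_mul_sub_le_choquetIntegral_const_sub (hμ : Monotone μ)
    (hμ_union : ∀ s t, μ (s ∪ t) ≤ μ s + μ t) (hE : μ E ≠ ∞)
    (hgE : choquetIntegral μ g E ≠ ∞) (c : ℝ) :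
    ENNReal.ofReal (c * (μ E).toReal - (choquetIntegral μ g E).toReal) ≤
      choquetIntegral μ (fun x => c - g x) E := by
  rcases le_or_gt 0 c with hc | hc
  · rw [ENNReal.ofReal_sub _ ENNReal.toReal_nonneg, ENNReal.ofReal_mul hc,
      ENNReal.ofReal_toReal hE, ENNReal.ofReal_toReal hgE, tsub_le_iff_right]
    exact mul_le_choquetIntegral_const_sub_add hμ hμ_union c
  · have : c * (μ E).toReal - (choquetIntegral μ g E).toReal ≤ 0 := by
      nlinarith [ENNReal.toReal_nonneg (a := μ E),
        ENNReal.toReal_nonneg (a := choquetIntegral μ g E)]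
    simp [ENNReal.ofReal_of_nonpos this]

lemma ofReal_exp_choquetAverage_mul_le (hμ : Monotone μ)
    (hμ_union : ∀ s t, μ (s ∪ t) ≤ μ s + μ t) {F : α → ℝ} {E₁ E₂ : Set α}
    (hF₁ : ∀ x ∈ E₁, 0 ≤ F x) (hE₁ : μ E₁ ≠ ∞) (hE₂ : μ E₂ ≠ ∞)
    (hFE₁ : choquetIntegral μ F E₁ ≠ ∞) (hFE₂ : choquetIntegral μ (fun x => -F x) E₂ ≠ ∞)
    (hpos : 0 < (μ E₁).toReal + (μ E₂).toReal) :
    ENNReal.ofReal (Real.exp (choquetAverage μ F E₁ E₂)) * (μ E₁ + μ E₂) ≤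
      choquetIntegral μ (fun x => Real.exp (F x)) E₁ +
        choquetIntegral μ (fun x => Real.exp (F x)) E₂ := by
  set a := choquetAverage μ F E₁ E₂ with ha
  have hexp : ∀ y, Real.exp a * ((1 - a) + y) ≤ Real.exp y := fun y => by
    have := mul_le_mul_of_nonneg_left (Real.add_one_le_exp (y - a)) (Real.exp_pos a).le
    rwa [← Real.exp_add, add_sub_cancel, show y - a + 1 = 1 - a + y by ring] at this
  have h₁ : ENNReal.ofReal (Real.exp a) *
      ENNReal.ofReal ((1 - a) * (μ E₁).toReal + (choquetIntegral μ F E₁).toReal) ≤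
        choquetIntegral μ (fun x => Real.exp (F x)) E₁ := by
    calc _ ≤ ENNReal.ofReal (Real.exp a) * choquetIntegral μ (fun x => (1 - a) + F x) E₁ := by
          gcongr
          exact ofReal_mul_add_le_choquetIntegral_const_add hμ hF₁ hE₁ hFE₁ _
      _ = choquetIntegral μ (fun x => Real.exp a * ((1 - a) + F x)) E₁ :=
          (choquetIntegral_const_mul (Real.exp_pos a)).symm
      _ ≤ _ := choquetIntegral_mono hμ fun x _ => hexp (F x)
  have h₂ : ENNReal.ofReal (Real.exp a) *
      ENNReal.ofReal ((1 - a) * (μ E₂).toReal - (choquetIntegral μ (fun x => -F x) E₂).toReal) ≤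
        choquetIntegral μ (fun x => Real.exp (F x)) E₂ := by
    calc _ ≤ ENNReal.ofReal (Real.exp a) * choquetIntegral μ (fun x => (1 - a) - -F x) E₂ := by
          gcongr
          exact ofReal_mul_sub_le_choquetIntegral_const_sub hμ hμ_union hE₂ hFE₂ _
      _ = choquetIntegral μ (fun x => Real.exp a * ((1 - a) - -F x)) E₂ :=
          (choquetIntegral_const_mul (Real.exp_pos a)).symm
      _ ≤ _ := choquetIntegral_mono hμ fun x _ => by simpa only [sub_neg_eq_add] using hexp (F x)
  have hsplit : (μ E₁).toReal + (μ E₂).toReal =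
      ((1 - a) * (μ E₁).toReal + (choquetIntegral μ F E₁).toReal) +
        ((1 - a) * (μ E₂).toReal - (choquetIntegral μ (fun x => -F x) E₂).toReal) := by
    rw [ha, choquetAverage]
    field_simp
    ring
  calc _ = ENNReal.ofReal (Real.exp a) * ENNReal.ofReal ((μ E₁).toReal + (μ E₂).toReal) := by
        rw [ENNReal.ofReal_add ENNReal.toReal_nonneg ENNReal.toReal_nonneg,
          ENNReal.ofReal_toReal hE₁, ENNReal.ofReal_toReal hE₂]
    _ ≤ _ := by
        rw [hsplit]
        exact (mul_le_mul_right ENNReal.ofReal_add_le _).trans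
          ((mul_add _ _ _).trans_le (add_le_add h₁ h₂))

lemma ofReal_exp_choquetAverage_le_div (hμ : Monotone μ)
    (hμ_union : ∀ s t, μ (s ∪ t) ≤ μ s + μ t) {F : α → ℝ} {S E₁ E₂ : Set α}
    (hE₁ : E₁ ⊆ S) (hE₂ : E₂ ⊆ S) (hS : S ⊆ E₁ ∪ E₂) (hS₀ : μ S ≠ 0) (hS_top : μ S ≠ ∞)
    (hF₁ : ∀ x ∈ E₁, 0 ≤ F x)
    (hFE₁ : choquetIntegral μ F E₁ ≠ ∞) (hFE₂ : choquetIntegral μ (fun x => -F x) E₂ ≠ ∞) :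
    ENNReal.ofReal (Real.exp (choquetAverage μ F E₁ E₂)) ≤
      (choquetIntegral μ (fun x => Real.exp (F x)) E₁ +
        choquetIntegral μ (fun x => Real.exp (F x)) E₂) / μ S := by
  have hE₁_top : μ E₁ ≠ ∞ := ne_top_of_le_ne_top hS_top (hμ hE₁)
  have hE₂_top : μ E₂ ≠ ∞ := ne_top_of_le_ne_top hS_top (hμ hE₂)
  have hS_le : μ S ≤ μ E₁ + μ E₂ := (hμ hS).trans (hμ_union _ _)
  have hpos : 0 < (μ E₁).toReal + (μ E₂).toReal := by
    rw [← ENNReal.toReal_add hE₁_top hE₂_top]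
    exact ENNReal.toReal_pos (ne_bot_of_le_ne_bot hS₀ hS_le)
      (ENNReal.add_ne_top.2 ⟨hE₁_top, hE₂_top⟩)
  rw [ENNReal.le_div_iff_mul_le (Or.inl hS₀) (Or.inl hS_top)]
  exact (mul_le_mul_right hS_le _).trans
    (ofReal_exp_choquetAverage_mul_le hμ hμ_union hF₁ hE₁_top hE₂_top hFE₁ hFE₂ hpos)

end Choquet

namespace Cube

variable {n : ℕ}

lemma volume_toSet (Q : Cube n) : volume Q.toSet = ENNReal.ofReal (Q.side ^ n) := by
  have : Q.toSet = Set.pi univ fun i => Ico (Q.corner i) (Q.corner i + Q.side) := by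
    ext x
    simp [toSet]
  simp [this, volume_pi_pi, Real.volume_Ico, ENNReal.ofReal_pow Q.side_pos.le]

lemma exists_dyadic_cover (R : Cube n) :
    ∃ D : (Fin n → Bool) → Cube n, (∀ b, (D b).IsDyadic) ∧ R.toSet ⊆ ⋃ b, (D b).toSet ∧
      ∀ b, (D b).side ≤ 2 * R.side := by
  obtain ⟨k, hk, hk'⟩ := exists_mem_Ico_zpow R.side_pos one_lt_two
  set h : ℝ := 2 ^ (k + 1)
  have hh : 0 < h := by positivity
  have hhR : h ≤ 2 * R.side := by
    simp only [h, zpow_add_one₀ (two_ne_zero (α := ℝ)), mul_comm _ (2:ℝ)]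
    gcongr
  set z : Fin n → ℤ := fun i => ⌊R.corner i / h⌋
  refine ⟨fun b => ⟨fun i => ((z i + if b i then 1 else 0 : ℤ) : ℝ) * h, h, hh⟩,
    fun b => ⟨k + 1, _, rfl, fun i => rfl⟩, fun x hx => ?_, fun b => hhR⟩
  have hlow : ∀ i, z i ≤ ⌊x i / h⌋ := fun i =>
    Int.floor_le_floor (div_le_div_of_nonneg_right (hx i).1 hh.le)
  have hup : ∀ i, ⌊x i / h⌋ ≤ z i + 1 := fun i => by
    rw [← Int.floor_add_one]
    refine Int.floor_le_floor ?_
    rw [div_add_one hh.ne', div_le_div_iff_of_pos_right hh]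
    linarith [(hx i).2]
  refine mem_iUnion.2 ⟨fun i => decide (⌊x i / h⌋ = z i + 1), fun i => ?_⟩
  have hfloor : ⌊x i / h⌋ = z i + if decide (⌊x i / h⌋ = z i + 1) then 1 else 0 := by
    have := hlow i
    have := hup i
    by_cases hi : ⌊x i / h⌋ = z i + 1
    · simp [hi]
    · simp only [hi, decide_false, Bool.false_eq_true, if_false, add_zero]
      omega
  dsimp only
  rw [← hfloor]
  constructor
  · exact (le_div_iff₀ hh).1 (Int.floor_le _)
  · have := Int.lt_floor_add_one (x i / h)
    rw [div_lt_iff₀ hh] at this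
    linarith

end Cube

section DyadicContent

variable {n : ℕ} {δ : ℝ}

lemma dContent_mono : Monotone (dContent n δ) := fun _ _ h =>
  le_iInf₂ fun Q hQ => iInf₂_le Q ⟨hQ.1, h.trans hQ.2⟩

lemma hContent_mono : Monotone (hContent n δ) := fun _ _ h =>
  le_iInf₂ fun Q hQ => iInf₂_le Q (h.trans hQ)

lemma hContent_le_dContent (E : Set (Fin n → ℝ)) : hContent n δ E ≤ dContent n δ E :=
  le_iInf₂ fun Q hQ => iInf₂_le Q hQ.2

lemma exists_dyadic_tsum_lt (hδ : 0 < δ) {ε : ℝ≥0∞} (hε : 0 < ε) :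
    ∃ T : ℕ → Cube n, (∀ j, (T j).IsDyadic) ∧ ∑' j, ENNReal.ofReal ((T j).side ^ δ) < ε := by
  set ρ := ENNReal.ofReal ((1 / 2 : ℝ) ^ δ)
  have hρ : ρ < 1 := ENNReal.ofReal_lt_one.2 (Real.rpow_lt_one (by norm_num) (by norm_num) hδ)
  let T : ℕ → ℕ → Cube n := fun m j => ⟨0, (1 / 2 : ℝ) ^ (m + j), by positivity⟩
  have hT : ∀ m, ∑' j, ENNReal.ofReal ((T m j).side ^ δ) = ρ ^ m * (1 - ρ)⁻¹ := fun m => by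
    rw [← ENNReal.tsum_geometric, ← ENNReal.tsum_mul_left]
    refine tsum_congr fun j => ?_
    rw [← Real.rpow_pow_comm (by norm_num), ENNReal.ofReal_pow (by positivity), pow_add]
  have hlim : Filter.Tendsto (fun m => ρ ^ m * (1 - ρ)⁻¹) Filter.atTop (nhds 0) := by
    simpa using ENNReal.Tendsto.mul_const (ENNReal.tendsto_pow_atTop_nhds_zero_iff.2 hρ)
      (Or.inr (ENNReal.inv_ne_top.2 (tsub_pos_of_lt hρ).ne'))
  obtain ⟨m, hm⟩ := ((tendsto_order.1 hlim).2 ε hε).exists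
  refine ⟨T m, fun j => ⟨-(m + j : ℕ), 0, ?_, fun i => by simp [T]⟩, (hT m).symm ▸ hm⟩
  rw [zpow_neg, zpow_natCast]
  exact (one_div_pow (2:ℝ) (m + j)).trans (one_div _)

/-- Padding with tiny dyadic cubes turns a countable dyadic cover into an admissible
`ℕ`-indexed one at arbitrarily small extra cost. -/
lemma dContent_le_tsum (hδ : 0 < δ) {ι : Type*} [Countable ι] {E : Set (Fin n → ℝ)}
    (Q : ι → Cube n) (hQ : ∀ i, (Q i).IsDyadic) (hE : E ⊆ ⋃ i, (Q i).toSet) :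
    dContent n δ E ≤ ∑' i, ENNReal.ofReal ((Q i).side ^ δ) := by
  refine ENNReal.le_of_forall_pos_le_add fun ε hε _ => ?_
  obtain ⟨T, hT, hTε⟩ := exists_dyadic_tsum_lt (n := n) hδ (ENNReal.coe_pos.2 hε)
  obtain ⟨e⟩ : Nonempty (ℕ ≃ ι ⊕ ℕ) := nonempty_equiv_of_countable
  set R : ι ⊕ ℕ → Cube n := Sum.elim Q T
  have hR : ∀ k, (R (e k)).IsDyadic := fun k => by
    rcases e k with i | j
    exacts [hQ i, hT j]
  have hER : E ⊆ ⋃ k, (R (e k)).toSet := fun x hx => by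
    obtain ⟨i, hi⟩ := mem_iUnion.1 (hE hx)
    exact mem_iUnion.2 ⟨e.symm (.inl i), by simpa [R] using hi⟩
  calc dContent n δ E ≤ ∑' k, ENNReal.ofReal ((R (e k)).side ^ δ) := iInf₂_le _ ⟨hR, hER⟩
    _ = ∑' p, ENNReal.ofReal ((R p).side ^ δ) :=
        e.tsum_eq fun p => ENNReal.ofReal ((R p).side ^ δ)
    _ = ∑' i, ENNReal.ofReal ((Q i).side ^ δ) + ∑' j, ENNReal.ofReal ((T j).side ^ δ) :=
        ENNReal.summable.tsum_sum ENNReal.summable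
    _ ≤ _ := add_le_add le_rfl hTε.le

lemma dContent_union_le (hδ : 0 < δ) (E F : Set (Fin n → ℝ)) :
    dContent n δ (E ∪ F) ≤ dContent n δ E + dContent n δ F := by
  refine ENNReal.le_iInf_add_iInf fun Q R => ENNReal.le_iInf_add_iInf fun hQ hR => ?_
  calc dContent n δ (E ∪ F) ≤ ∑' p, ENNReal.ofReal ((Sum.elim Q R p).side ^ δ) := by
        refine dContent_le_tsum hδ _ (Sum.rec hQ.1 hR.1) (union_subset ?_ ?_)
        · exact hQ.2.trans (iUnion_subset fun i => subset_iUnion_of_subset (.inl i) subset_rfl)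
        · exact hR.2.trans (iUnion_subset fun i => subset_iUnion_of_subset (.inr i) subset_rfl)
    _ = _ := ENNReal.summable.tsum_sum ENNReal.summable

lemma dContent_le_mul_hContent (hδ : 0 < δ) (E : Set (Fin n → ℝ)) :
    dContent n δ E ≤ 2 ^ n * ENNReal.ofReal (2 ^ δ) * hContent n δ E := by
  have hC₀ : (2 ^ n * ENNReal.ofReal (2 ^ δ) : ℝ≥0∞) ≠ 0 := by positivity
  have hC : (2 ^ n * ENNReal.ofReal (2 ^ δ) : ℝ≥0∞) ≠ ∞ := by finiteness
  simp only [hContent, ENNReal.mul_iInf_of_ne hC₀ hC]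
  refine le_iInf₂ fun Q hEQ => ?_
  choose D hD hQD hDQ using fun i => (Q i).exists_dyadic_cover
  have hcost : ∀ i b, ENNReal.ofReal ((D i b).side ^ δ) ≤
      ENNReal.ofReal (2 ^ δ) * ENNReal.ofReal ((Q i).side ^ δ) := fun i b => by
    rw [← ENNReal.ofReal_mul (by positivity), ← Real.mul_rpow zero_le_two (Q i).side_pos.le]
    exact ENNReal.ofReal_le_ofReal
      (Real.rpow_le_rpow (D i b).side_pos.le (hDQ i b) hδ.le)
  calc dContent n δ E ≤ ∑' p : ℕ × (Fin n → Bool), ENNReal.ofReal ((D p.1 p.2).side ^ δ) := by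
        refine dContent_le_tsum hδ _ (fun p => hD p.1 p.2) fun x hx => ?_
        obtain ⟨i, hi⟩ := mem_iUnion.1 (hEQ hx)
        obtain ⟨b, hb⟩ := mem_iUnion.1 (hQD i hi)
        exact mem_iUnion.2 ⟨(i, b), hb⟩
    _ = ∑' i, ∑' b, ENNReal.ofReal ((D i b).side ^ δ) :=
        ENNReal.tsum_prod (f := fun i b => ENNReal.ofReal ((D i b).side ^ δ))
    _ ≤ ∑' i, 2 ^ n * ENNReal.ofReal (2 ^ δ) * ENNReal.ofReal ((Q i).side ^ δ) := by
        refine ENNReal.tsum_le_tsum fun i => ?_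
        calc ∑' b, ENNReal.ofReal ((D i b).side ^ δ)
            ≤ ∑' _ : Fin n → Bool, ENNReal.ofReal (2 ^ δ) * ENNReal.ofReal ((Q i).side ^ δ) :=
              ENNReal.tsum_le_tsum (hcost i)
          _ = _ := by simp [tsum_fintype, mul_assoc]
    _ = _ := ENNReal.tsum_mul_left

lemma dContent_cube_ne_top (hδ : 0 < δ) (Q : Cube n) : dContent n δ Q.toSet ≠ ∞ := by
  obtain ⟨D, hD, hQD, -⟩ := Q.exists_dyadic_cover
  refine ne_top_of_le_ne_top ?_ (dContent_le_tsum hδ D hD hQD)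
  rw [tsum_fintype]
  exact ENNReal.sum_ne_top.2 fun _ _ => ENNReal.ofReal_ne_top

/-- Comparing volumes: a cover of `Q` by cubes smaller than `Q` costs at least `ℓ(Q)^δ`
because `δ ≤ n`. -/
lemma ofReal_side_rpow_le_hContent (hδ₀ : 0 ≤ δ) (hδn : δ ≤ n) (Q : Cube n) :
    ENNReal.ofReal (Q.side ^ δ) ≤ hContent n δ Q.toSet := by
  refine le_iInf₂ fun R hQR => ?_
  by_cases hbig : ∃ i, Q.side ≤ (R i).side
  · obtain ⟨i, hi⟩ := hbig
    exact (ENNReal.ofReal_le_ofReal (Real.rpow_le_rpow Q.side_pos.le hi hδ₀)).trans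
      (ENNReal.le_tsum i)
  simp only [not_exists, not_le] at hbig
  have hsplit : ∀ s : ℝ, 0 < s → s ^ n = s ^ δ * s ^ ((n : ℝ) - δ) := fun s hs => by
    rw [← Real.rpow_add hs, add_sub_cancel, Real.rpow_natCast]
  have hne : ENNReal.ofReal (Q.side ^ ((n : ℝ) - δ)) ≠ 0 :=
    ENNReal.ofReal_pos.2 (Real.rpow_pos_of_pos Q.side_pos _) |>.ne'
  refine (ENNReal.mul_le_mul_iff_left hne ENNReal.ofReal_ne_top).1 ?_
  calc ENNReal.ofReal (Q.side ^ δ) * ENNReal.ofReal (Q.side ^ ((n : ℝ) - δ))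
      = volume Q.toSet := by
        rw [Q.volume_toSet, hsplit _ Q.side_pos,
          ENNReal.ofReal_mul (Real.rpow_nonneg Q.side_pos.le _)]
    _ ≤ ∑' i, volume (R i).toSet := (measure_mono hQR).trans (measure_iUnion_le _)
    _ ≤ ∑' i, ENNReal.ofReal ((R i).side ^ δ) * ENNReal.ofReal (Q.side ^ ((n : ℝ) - δ)) := by
        refine ENNReal.tsum_le_tsum fun i => ?_
        rw [(R i).volume_toSet, hsplit _ (R i).side_pos,
          ← ENNReal.ofReal_mul (Real.rpow_nonneg (R i).side_pos.le _)]
        exact ENNReal.ofReal_le_ofReal (mul_le_mul_of_nonneg_left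
          (Real.rpow_le_rpow (R i).side_pos.le (hbig i).le (by linarith))
          (Real.rpow_nonneg (R i).side_pos.le _))
    _ = _ := ENNReal.tsum_mul_right

lemma dContent_cube_ne_zero (hδ₀ : 0 ≤ δ) (hδn : δ ≤ n) (Q : Cube n) :
    dContent n δ Q.toSet ≠ 0 :=
  (ENNReal.ofReal_pos.2 (Real.rpow_pos_of_pos Q.side_pos δ)).trans_le
    ((ofReal_side_rpow_le_hContent hδ₀ hδn Q).trans (hContent_le_dContent _)) |>.ne'

end DyadicContent

lemma integD_ne_top_of_memL1loc {n : ℕ} {δ : ℝ} (hδ : 0 < δ) {f g : (Fin n → ℝ) → ℝ}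
    (hf : MemL1loc n δ f) {Q : Cube n} {E : Set (Fin n → ℝ)} (hE : E ⊆ Q.toSet)
    (hg : ∀ x ∈ E, g x ≤ |f x|) : integD n δ g E ≠ ∞ := by
  set K : Set (Fin n → ℝ) := Set.pi univ fun i => Icc (Q.corner i) (Q.corner i + Q.side)
  have hQK : Q.toSet ⊆ K := fun x hx i _ => ⟨(hx i).1, (hx i).2.le⟩
  have hC : (2 ^ n * ENNReal.ofReal (2 ^ δ) : ℝ≥0∞) ≠ ∞ := by finiteness
  refine ne_top_of_le_ne_top (ENNReal.mul_ne_top hC (hf.2 K ?_).ne)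
    (choquetIntegral_le_mul hContent_mono (dContent_le_mul_hContent hδ) hC (hE.trans hQK) hg)
  exact isCompact_univ_pi fun _ => isCompact_Icc

theorem stmt12_general (n : ℕ) (δ : ℝ) (hδ0 : 0 < δ) (hδn : δ ≤ n)
    (f : (Fin n → ℝ) → ℝ) (hf : MemL1loc n δ f) :
    ∀ Q : Cube n,
      ENNReal.ofReal (Real.exp (avgQ n δ f Q)) ≤
        (integD n δ (fun x => Real.exp (f x)) (Q.toSet ∩ {x | 0 ≤ f x}) +
            integD n δ (fun x => Real.exp (f x)) (Q.toSet ∩ {x | f x < 0})) /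
          dContent n δ Q.toSet ∧
      ENNReal.ofReal (Real.exp (-(avgQ n δ f Q))) ≤
        (integD n δ (fun x => Real.exp (-(f x))) (Q.toSet ∩ {x | 0 ≤ f x}) +
            integD n δ (fun x => Real.exp (-(f x))) (Q.toSet ∩ {x | f x < 0})) /
          dContent n δ Q.toSet := by
  intro Q
  set Epos := Q.toSet ∩ {x | 0 ≤ f x}
  set Eneg := Q.toSet ∩ {x | f x < 0}
  have hQ : Q.toSet ⊆ Epos ∪ Eneg := fun x hx => (le_or_gt 0 (f x)).imp (⟨hx, ·⟩) (⟨hx, ·⟩)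
  have hQ₀ := dContent_cube_ne_zero hδ0.le hδn Q
  have hQ_top := dContent_cube_ne_top hδ0 Q
  have hfpos : integD n δ f Epos ≠ ∞ :=
    integD_ne_top_of_memL1loc hδ0 hf inter_subset_left fun x _ => le_abs_self (f x)
  have hfneg : integD n δ (fun x => -f x) Eneg ≠ ∞ :=
    integD_ne_top_of_memL1loc hδ0 hf inter_subset_left fun x _ => neg_le_abs (f x)
  refine ⟨ofReal_exp_choquetAverage_le_div dContent_mono (dContent_union_le hδ0)
    inter_subset_left inter_subset_left hQ hQ₀ hQ_top (fun x hx => hx.2) hfpos hfneg, ?_⟩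
  have h := ofReal_exp_choquetAverage_le_div (F := fun x => -f x) dContent_mono
    (dContent_union_le hδ0) inter_subset_left inter_subset_left (hQ.trans (union_comm _ _).le)
    hQ₀ hQ_top (fun x hx => neg_nonneg.2 hx.2.le) hfneg (by simp only [neg_neg]; exact hfpos)
  rwa [choquetAverage_neg, add_comm] at h

/-- Jensen-type inequalities for the integral average `f_{Q,δ}`. -/
theorem stmt12 (n : ℕ) (hn : 1 ≤ n) (δ : ℝ) (hδ0 : 0 < δ) (hδn : δ ≤ n)
    (f : (Fin n → ℝ) → ℝ) (hf : MemL1loc n δ f) :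
    ∀ Q : Cube n,
      ENNReal.ofReal (Real.exp (avgQ n δ f Q)) ≤
        (integD n δ (fun x => Real.exp (f x)) (Q.toSet ∩ {x | 0 ≤ f x}) +
            integD n δ (fun x => Real.exp (f x)) (Q.toSet ∩ {x | f x < 0})) /
          dContent n δ Q.toSet ∧
      ENNReal.ofReal (Real.exp (-(avgQ n δ f Q))) ≤
        (integD n δ (fun x => Real.exp (-(f x))) (Q.toSet ∩ {x | 0 ≤ f x}) +
            integD n δ (fun x => Real.exp (-(f x))) (Q.toSet ∩ {x | f x < 0})) /
          dContent n δ Q.toSet :=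
  stmt12_general n δ hδ0 hδn f hf
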